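/- Let f be an allocation rule for a multi-unit auction with m items and n bidders, with k = max{m,n}, that gives strictly better than min{m,n} approximation to welfare over single-minded valuations. Then: (i) on the profile where bidder 1 demands all m items at value k⁴ and every other bidder demands 1 item at value 1, f must allocate all m items to bidder 1; (ii) on the profile where bidder 2 demands all m items at value k⁴, bidder 1 demands 1 item at value 1, and all others demand 1 item at value 1, f must allocate all m items to bidder 2; in particular the two allocations differ. -/
import Mathlib


/-- The single-minded multi-unit valuation with parameters `(q, α)`: value `α` for any
quantity of at least `q` items, and `0` otherwise. -/
noncomputable def smVal (p : ℕ × NNReal) (s : ℕ) : ℝ := if p.1 ≤ s then (p.2 : ℝ) else 0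

lemma key_alloc
    (m n : ℕ) (hm : 2 ≤ m) (hn : 2 ≤ n)
    (f : (Fin n → ℕ × NNReal) → Fin n → ℕ)
    (c : ℝ) (hc0 : 0 < c) (hc : c < min (m : ℝ) n)
    (hfeas : ∀ v : Fin n → ℕ × NNReal, (∑ j, f v j) ≤ m)
    (happrox : ∀ (v : Fin n → ℕ × NNReal) (a : Fin n → ℕ), (∑ j, a j) ≤ m →
      (∑ j, smVal (v j) (a j)) ≤ c * ∑ j, smVal (v j) (f v j))
    (k : ℕ) (hk : k = max m n)
    (i : Fin n) (v : Fin n → ℕ × NNReal)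
    (hv : v = fun j => if j = i then (m, (k : NNReal) ^ 4) else (1, 1)) :
    f v i = m := by
  have hvi : v i = (m, (k : NNReal) ^ 4) := by rw [hv]; simp
  have hvj : ∀ j, j ≠ i → v j = (1, 1) := by intro j hj; rw [hv]; simp [hj]
  clear hv
  have hk2 : 2 ≤ k := by omega
  -- the allocation giving everything to i
  set a : Fin n → ℕ := fun j => if j = i then m else 0 with ha
  have hsum : (∑ j, a j) = m := by
    simp [ha, Finset.sum_ite_eq']
  have hval : (∑ j, smVal (v j) (a j)) = (k : ℝ) ^ 4 := by
    rw [Finset.sum_eq_single i]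
    · rw [hvi]; simp [ha, smVal]
    · intro b _ hb
      rw [hvj b hb]; simp [ha, hb, smVal]
    · simp
  have h1 := happrox v a (le_of_eq hsum)
  rw [hval] at h1
  -- first show m ≤ f v i
  by_contra hne
  have hlt : ¬ (m ≤ f v i) := by
    intro hle
    have hsumf := hfeas v
    have : f v i ≤ ∑ j, f v j := Finset.single_le_sum (fun j _ => Nat.zero_le _) (Finset.mem_univ i)
    omega
  -- each term of welfare(f v) is ≤ 1
  have hb : (∑ j, smVal (v j) (f v j)) ≤ (k : ℝ) := by
    calc (∑ j, smVal (v j) (f v j)) ≤ ∑ _j : Fin n, (1 : ℝ) := by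
          apply Finset.sum_le_sum
          intro j _
          by_cases hj : j = i
          · subst hj
            rw [hvi]
            simp only [smVal]
            rw [if_neg hlt]
            norm_num
          · rw [hvj j hj]
            simp only [smVal]
            split <;> norm_num
      _ = (n : ℝ) := by simp
      _ ≤ (k : ℝ) := by exact_mod_cast (by omega : n ≤ k)
  have hck : c ≤ (k : ℝ) := by
    have : (min (m:ℝ) n) ≤ (k : ℝ) := by
      have : (m : ℝ) ≤ k := by exact_mod_cast (by omega : m ≤ k)
      exact le_trans (min_le_left _ _) this
    linarith
  have hS0 : (0:ℝ) ≤ ∑ j, smVal (v j) (f v j) := by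
    apply Finset.sum_nonneg
    intro j _
    unfold smVal
    split
    · positivity
    · exact le_refl 0
  have hk2' : (2:ℝ) ≤ (k:ℝ) := by exact_mod_cast hk2
  have h2 : c * (∑ j, smVal (v j) (f v j)) ≤ (k : ℝ) * k :=
    mul_le_mul hck hb hS0 (by positivity)
  nlinarith [h1, h2, hk2', sq_nonneg ((k:ℝ) * k - 1), sq_nonneg ((k:ℝ) - 1)]

/-- Lemma 2: Let `f` be a feasible allocation rule for a multi-unit
auction with `m ≥ 2` items and `n ≥ 2` single-minded bidders, `k = max {m, n}`, that
approximates welfare strictly better than `min {m, n}`. Then (i) on the profile where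
bidder `1` demands all `m` items at value `k⁴` and everyone else demands `1` item at
value `1`, `f` gives all `m` items to bidder `1`; (ii) symmetrically with bidder `2`
demanding all `m` items at value `k⁴`, `f` gives all `m` items to bidder `2`; in
particular the two allocations differ. -/
theorem multiunit_allocations_differ
    (m n : ℕ) (hm : 2 ≤ m) (hn : 2 ≤ n)
    (f : (Fin n → ℕ × NNReal) → Fin n → ℕ)
    (c : ℝ) (hc0 : 0 < c) (hc : c < min (m : ℝ) n)
    (hfeas : ∀ v : Fin n → ℕ × NNReal, (∑ j, f v j) ≤ m)
    (happrox : ∀ (v : Fin n → ℕ × NNReal) (a : Fin n → ℕ), (∑ j, a j) ≤ m →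
      (∑ j, smVal (v j) (a j)) ≤ c * ∑ j, smVal (v j) (f v j))
    (k : ℕ) (hk : k = max m n)
    (i0 : Fin n) (hi0 : i0 = ⟨0, by omega⟩) (i1 : Fin n) (hi1 : i1 = ⟨1, by omega⟩)
    (v v' : Fin n → ℕ × NNReal)
    (hv : v = fun j => if j = i0 then (m, (k : NNReal) ^ 4) else (1, 1))
    (hv' : v' = fun j => if j = i1 then (m, (k : NNReal) ^ 4) else (1, 1)) :
    f v i0 = m ∧ f v' i1 = m ∧ f v ≠ f v' := by
  have h0 := key_alloc m n hm hn f c hc0 hc hfeas happrox k hk i0 v hv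
  have h1 := key_alloc m n hm hn f c hc0 hc hfeas happrox k hk i1 v' hv'
  refine ⟨h0, h1, ?_⟩
  intro heq
  have hne : i0 ≠ i1 := by
    subst hi0 hi1
    simp [Fin.ext_iff]
  -- f v i1 = 0 since f v i0 = m already
  have hsumf := hfeas v
  have : f v i0 + f v i1 ≤ ∑ j, f v j := by
    have := Finset.add_sum_erase _ (f v) (Finset.mem_univ i0)
    have h2 : f v i1 ≤ ∑ j ∈ Finset.univ.erase i0, f v j :=
      Finset.single_le_sum (fun j _ => Nat.zero_le _)
        (Finset.mem_erase.mpr ⟨hne.symm, Finset.mem_univ i1⟩)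
    omega
  have hz : f v i1 = 0 := by omega
  rw [heq] at hz
  omega
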